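/- arXiv:0902.3592 — 5 statements merged into one kernel-verified Lean document; each statement's English description precedes it below -/
import Mathlib

section
/- Let D be an integral domain with quotient field K and let A be a nonzero fractional ideal of D. Then A is v-invertible (i.e., ((A·A⁻¹)⁻¹)⁻¹ = D, equivalently (A·A⁻¹)⁻¹ = D) if and only if (A⁻¹ : A⁻¹) = D, where A⁻¹ = (D : A) = {z ∈ K | zA ⊆ D} and (A⁻¹ : A⁻¹) = {z ∈ K | zA⁻¹ ⊆ A⁻¹}. -/
open FractionalIdeal

variable {D K : Type*} [CommRing D] [IsDomain D] [Field K] [Algebra D K] [IsFractionRing D K]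

/-- The `v`-operation: `A ↦ (A⁻¹)⁻¹`, where `A⁻¹ = (D : A) = 1 / A`. -/
noncomputable def vop (A : FractionalIdeal (nonZeroDivisors D) K) :
    FractionalIdeal (nonZeroDivisors D) K := 1 / (1 / A)

/-- `A` is `v`-invertible if `(A·A⁻¹)^v = D`. -/
noncomputable def IsVInvertible (A : FractionalIdeal (nonZeroDivisors D) K) : Prop :=
  vop (A * (1 / A)) = 1

/-! Colon ideals associate, `(D : A·A⁻¹) = ((D : A) : A⁻¹) = (A⁻¹ : A⁻¹)`, and `B ↦ B⁻¹` satisfies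
`B⁻¹⁻¹⁻¹ = B⁻¹`; so for `B = A·A⁻¹`, `B⁻¹⁻¹ = D` forces `B⁻¹ = D⁻¹ = D`. -/

namespace FractionalIdeal

protected theorem mul_ne_zero {R P : Type*} [CommRing R] {S : Submonoid R} [CommRing P]
    [NoZeroDivisors P] [Algebra R P] {I J : FractionalIdeal S P} (hI : I ≠ 0) (hJ : J ≠ 0) :
    I * J ≠ 0 := by
  obtain ⟨x, hxI, hx⟩ : ∃ x ∈ I, x ≠ 0 := by simpa [eq_zero_iff] using hI
  obtain ⟨y, hyJ, hy⟩ : ∃ y ∈ J, y ≠ 0 := by simpa [eq_zero_iff] using hJ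
  exact fun h => mul_ne_zero hx hy (eq_zero_iff.mp h _ (mul_mem_mul hxI hyJ))

protected theorem zero_div (I : FractionalIdeal (nonZeroDivisors D) K) : 0 / I = 0 := by
  rcases eq_or_ne I 0 with rfl | hI
  · exact div_zero
  · by_contra h
    have h_mul_le : 0 / I * I ≤ 0 := (le_div_iff_mul_le hI).mp le_rfl
    exact FractionalIdeal.mul_ne_zero h hI (le_antisymm h_mul_le (zero_le _))

protected theorem one_div_ne_zero {I : FractionalIdeal (nonZeroDivisors D) K} (hI : I ≠ 0) :
    1 / I ≠ 0 :=
  right_ne_zero_of_mul (bot_lt_mul_inv hI).ne'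

theorem le_one_div_one_div (I : FractionalIdeal (nonZeroDivisors D) K) : I ≤ 1 / (1 / I) := by
  rcases eq_or_ne I 0 with rfl | hI
  · exact zero_le _
  · exact (le_div_iff_mul_le (FractionalIdeal.one_div_ne_zero hI)).mpr mul_one_div_le_one

theorem one_div_one_div_one_div (I : FractionalIdeal (nonZeroDivisors D) K) :
    1 / (1 / (1 / I)) = 1 / I := by
  rcases eq_or_ne I 0 with rfl | hI
  · simp only [div_zero]
  · exact le_antisymm (inv_anti_mono hI (FractionalIdeal.one_div_ne_zero
      (FractionalIdeal.one_div_ne_zero hI)) (le_one_div_one_div I)) (le_one_div_one_div _)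

theorem one_div_one_div_eq_one_iff (I : FractionalIdeal (nonZeroDivisors D) K) :
    1 / (1 / I) = 1 ↔ 1 / I = 1 := by
  constructor <;> intro h
  · rw [← one_div_one_div_one_div, h, div_one]
  · rw [h, div_one]

protected theorem div_mul_eq_div_div (I J L : FractionalIdeal (nonZeroDivisors D) K) :
    I / (J * L) = I / J / L := by
  rcases eq_or_ne J 0 with rfl | hJ
  · rw [zero_mul, div_zero, FractionalIdeal.zero_div]
  rcases eq_or_ne L 0 with rfl | hL
  · simp only [mul_zero, div_zero]
  refine eq_of_forall_le_iff fun X => ?_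
  rw [le_div_iff_mul_le (FractionalIdeal.mul_ne_zero hJ hL), le_div_iff_mul_le hL,
    le_div_iff_mul_le hJ, mul_assoc, mul_comm J]

end FractionalIdeal

theorem vInvertible_iff_inv_colon_inv_eq_one_general
    (A : FractionalIdeal (nonZeroDivisors D) K) :
    IsVInvertible A ↔ (1 / A) / (1 / A) = 1 := by
  rw [IsVInvertible, vop, one_div_one_div_eq_one_iff, FractionalIdeal.div_mul_eq_div_div]

/-- A nonzero fractional ideal `A` is `v`-invertible iff `(A⁻¹ : A⁻¹) = D`. -/
theorem vInvertible_iff_inv_colon_inv_eq_one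
    (A : FractionalIdeal (nonZeroDivisors D) K) (hA : A ≠ 0) :
    IsVInvertible A ↔ (1 / A) / (1 / A) = 1 :=
  vInvertible_iff_inv_colon_inv_eq_one_general A
end

section
/- Let D be an essential domain, i.e., D = ⋂_{P ∈ Δ} D_P for some set Δ of prime ideals of D such that each localization D_P is a valuation domain. Then D is a v-domain: for every nonzero finitely generated fractional ideal F of D, (F·F⁻¹)^v = D. -/
/-!
Fix a prime `P` of the family. As `D_P` is a valuation ring, one generator `a` of `F` divides
all the others in `D_P`; clearing the finitely many denominators gives `s ∉ P` with
`s / a ∈ F⁻¹`, hence `s = a · (s / a) ∈ F F⁻¹`. So `x (F F⁻¹) ⊆ D` forces `x s ∈ D`, i.e.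
`x ∈ D_P`, and intersecting over the family gives `(F F⁻¹)⁻¹ = D`.
-/

open FractionalIdeal
open scoped nonZeroDivisors

variable {D K : Type*} [CommRing D] [IsDomain D] [Field K] [Algebra D K] [IsFractionRing D K]

theorem ValuationRing.exists_mem_forall_eq_mul {A L : Type*} [CommRing A] [IsDomain A]
    [ValuationRing A] [Field L] [Algebra A L] [IsFractionRing A L] {s : Finset L}
    (hs : s.Nonempty) : ∃ a ∈ s, ∀ b ∈ s, ∃ r : A, b = a * algebraMap A L r := by
  obtain ⟨a, ha, hmax⟩ := s.exists_max_image (ValuationRing.valuation A L) hs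
  refine ⟨a, ha, fun b hb => ?_⟩
  by_cases ha0 : a = 0
  · have hb0 : b = 0 := by simpa [ha0] using hmax b hb
    exact ⟨0, by simp [hb0]⟩
  · have hint : b / a ∈ (ValuationRing.valuation A L).integer := by
      rw [Valuation.mem_integer_iff, map_div₀]
      exact div_le_one_of_le₀ (hmax b hb) _root_.zero_le
    obtain ⟨r, hr⟩ := (ValuationRing.mem_integer_iff A L _).mp hint
    exact ⟨r, by rw [hr, mul_div_cancel₀ _ ha0]⟩

theorem Subalgebra.mem_of_algebraMap_eq_mul {R L : Type*} [CommRing R] [CommRing L]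
    [Algebra R L] {S : Submonoid R} (T : Subalgebra R L) [IsLocalization S T] {x : L} {s d : R}
    (hs : s ∈ S) (hd : algebraMap R L d = x * algebraMap R L s) : x ∈ T := by
  have hunit : IsUnit (algebraMap R L s) := by
    simpa using (IsLocalization.map_units T ⟨s, hs⟩).map T.val
  have hspec := congrArg T.val (IsLocalization.mk'_spec T d ⟨s, hs⟩)
  simp only [map_mul, Subalgebra.coe_val, SubalgebraClass.coe_algebraMap] at hspec
  have : x = IsLocalization.mk' T d ⟨s, hs⟩ := hunit.mul_left_injective (hd ▸ hspec).symm
  exact this ▸ SetLike.coe_mem _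

namespace FractionalIdeal

theorem mul_one_div_self_ne_zero {F : FractionalIdeal D⁰ K} (hF : F ≠ 0) : F * (1 / F) ≠ 0 := by
  obtain ⟨a, ha0, haF⟩ := exists_ne_zero_mem_isInteger hF
  obtain ⟨den, hden, hdenF⟩ := F.isFractional
  have hden_mem : algebraMap D K den ∈ 1 / F := by
    rw [mem_div_iff_of_ne_zero hF]
    intro y hy
    obtain ⟨e, he⟩ := hdenF y hy
    exact (mem_one_iff _).mpr ⟨e, by rw [he, Algebra.smul_def]⟩
  have hprod : algebraMap D K a * algebraMap D K den ≠ 0 :=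
    mul_ne_zero (IsFractionRing.to_map_ne_zero_of_mem_nonZeroDivisors
      (mem_nonZeroDivisors_of_ne_zero ha0))
      (IsFractionRing.to_map_ne_zero_of_mem_nonZeroDivisors hden)
  intro h
  exact hprod ((mem_zero_iff _).mp (h ▸ mul_mem_mul haF hden_mem))

theorem mem_one_div_of_span_eq {F : FractionalIdeal D⁰ K} (hF : F ≠ 0) {g : Set K}
    (hg : Submodule.span D g = F) {c : K} (hc : ∀ b ∈ g, c * b ∈ (1 : FractionalIdeal D⁰ K)) :
    c ∈ 1 / F := by
  rw [mem_div_iff_of_ne_zero hF]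
  intro y hy
  rw [← mem_coe, ← hg] at hy
  have hspan : Submodule.span D g ≤
      ((1 : FractionalIdeal D⁰ K) : Submodule D K).comap (LinearMap.mulLeft D c) :=
    Submodule.span_le.mpr hc
  exact hspan hy

theorem exists_algebraMap_mem_mul_one_div (S : Submonoid D) (T : Subalgebra D K)
    [IsLocalization S T] [ValuationRing T] {F : FractionalIdeal D⁰ K} (hF : F ≠ 0)
    (hFG : (F : Submodule D K).FG) : ∃ s ∈ S, algebraMap D K s ∈ F * (1 / F) := by
  obtain ⟨g, hg⟩ := hFG
  have hgne : g.Nonempty := by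
    rw [Finset.nonempty_iff_ne_empty]
    rintro rfl
    apply hF
    rw [← coeToSubmodule_inj, ← hg, coe_zero, Finset.coe_empty, Submodule.span_empty]
  obtain ⟨a, ha, hdom⟩ := ValuationRing.exists_mem_forall_eq_mul (A := T) hgne
  have haF : a ∈ F := by
    rw [← mem_coe, ← hg]
    exact Submodule.subset_span ha
  have ha0 : a ≠ 0 := by
    rintro rfl
    apply hF
    rw [← coeToSubmodule_inj, ← hg, coe_zero, Submodule.span_eq_bot]
    intro b hb
    obtain ⟨r, hr⟩ := hdom b hb
    simpa using hr
  choose r hr using hdom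
  obtain ⟨σ, hσ⟩ := IsLocalization.exist_integer_multiples S Finset.univ
    (fun b : g => r b b.2)
  have hdual : algebraMap D K σ / a ∈ 1 / F := by
    refine mem_one_div_of_span_eq hF hg fun b hb => ?_
    obtain ⟨d, hd⟩ := hσ ⟨b, hb⟩ (Finset.mem_univ _)
    refine (mem_one_iff _).mpr ⟨d, ?_⟩
    have hdK := congrArg ((↑) : T → K) hd
    simp only [SubalgebraClass.coe_algebraMap, Algebra.smul_def,
      MulMemClass.coe_mul] at hdK
    rw [hdK]
    conv_rhs => rw [hr b hb]
    field_simp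
    rfl
  refine ⟨σ, σ.2, ?_⟩
  simpa [mul_div_cancel₀ _ ha0] using mul_mem_mul haF hdual

end FractionalIdeal

/-- An essential domain is a `v`-domain. -/
theorem essential_domain_is_vDomain {ι : Type*} (P : ι → Ideal D)
    (hP : ∀ i, (P i).IsPrime) (T : ι → Subalgebra D K)
    (hloc : ∀ i, IsLocalization (@Ideal.primeCompl D _ (P i) (hP i)) (T i))
    (hval : ∀ i, ValuationRing (T i))
    (hint : ⨅ i, T i = ⊥) :
    ∀ F : FractionalIdeal (nonZeroDivisors D) K, F ≠ 0 →
      (F : Submodule D K).FG → IsVInvertible F := by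
  intro F hF hFG
  have hne := mul_one_div_self_ne_zero hF
  have hdual : 1 / (F * (1 / F)) = 1 := by
    refine le_antisymm (fun x hx => ?_) ((le_div_iff_mul_le hne).mpr ?_)
    · rw [mem_div_iff_of_ne_zero hne] at hx
      have hxT : x ∈ ⨅ i, T i := Algebra.mem_iInf.mpr fun i => by
        have := hloc i
        have := hval i
        obtain ⟨s, hs, hsF⟩ := exists_algebraMap_mem_mul_one_div (P i).primeCompl (T i) hF hFG
        obtain ⟨d, hd⟩ := (mem_one_iff _).mp (hx _ hsF)
        exact (T i).mem_of_algebraMap_eq_mul hs hd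
      rw [hint, Algebra.mem_bot] at hxT
      exact (mem_one_iff _).mpr hxT
    · rw [one_mul]
      exact mul_one_div_le_one
  rw [IsVInvertible, vop, hdual, FractionalIdeal.div_one]
end

section
/- Let D be an integral domain. Then the following are equivalent: (i) for every nonzero finitely generated fractional ideal F of D, (F^v : F^v) = D; (ii) for every nonzero finitely generated fractional ideal F of D, (F·F⁻¹)⁻¹ = D (i.e., D is a v-domain). -/
open FractionalIdeal

variable {D K : Type*} [CommRing D] [IsDomain D] [Field K] [Algebra D K] [IsFractionRing D K]

/-! Always `1 / (F * F⁻¹) = F⁻¹ / F⁻¹` and `A / A ≤ A⁻¹ / A⁻¹`; applied to `A = F⁻¹` and to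
`A = F^v`, whose inverse is again `F⁻¹`, the inequality gives `F⁻¹ / F⁻¹ = F^v / F^v`. So the two
conditions coincide ideal by ideal. -/

namespace FractionalIdeal

variable {A B : FractionalIdeal (nonZeroDivisors D) K}

protected theorem one_div_ne_zero_s6 (hA : A ≠ 0) : 1 / A ≠ 0 := fun h =>
  (bot_lt_mul_inv hA).ne' (by rw [inv_eq, h, mul_zero]; rfl)

theorem one_div_mul_eq_one_div_div (hA : A ≠ 0) (hB : B ≠ 0) : 1 / (A * B) = 1 / A / B := by
  have hAB : A * B ≠ 0 := by
    simpa only [ne_eq, ← coeToSubmodule_eq_bot, coe_mul, Submodule.mul_eq_bot, not_or]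
      using And.intro hA hB
  refine eq_of_forall_le_iff fun X => ?_
  rw [le_div_iff_mul_le hAB, le_div_iff_mul_le hB, le_div_iff_mul_le hA, ← mul_assoc,
    mul_right_comm]

theorem div_self_le_one_div_div_one_div (A : FractionalIdeal (nonZeroDivisors D) K) :
    A / A ≤ 1 / A / (1 / A) := by
  rcases eq_or_ne A 0 with rfl | hA
  · simp
  rw [le_div_iff_mul_le (FractionalIdeal.one_div_ne_zero_s6 hA), le_div_iff_mul_le hA]
  calc A / A * (1 / A) * A = A / A * A * (1 / A) := mul_right_comm _ _ _
    _ ≤ A * (1 / A) := mul_left_mono ((le_div_iff_mul_le hA).mp le_rfl)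
    _ ≤ 1 := mul_one_div_le_one

end FractionalIdeal

theorem vop_ne_zero {A : FractionalIdeal (nonZeroDivisors D) K} (hA : A ≠ 0) : vop A ≠ 0 :=
  FractionalIdeal.one_div_ne_zero_s6 (FractionalIdeal.one_div_ne_zero_s6 hA)

theorem le_vop (A : FractionalIdeal (nonZeroDivisors D) K) : A ≤ vop A := by
  rcases eq_or_ne A 0 with rfl | hA
  · exact zero_le _
  rw [vop, le_div_iff_mul_le (FractionalIdeal.one_div_ne_zero_s6 hA)]
  exact mul_one_div_le_one

theorem one_div_vop (A : FractionalIdeal (nonZeroDivisors D) K) : 1 / vop A = 1 / A := by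
  rcases eq_or_ne A 0 with rfl | hA
  · simp [vop]
  exact le_antisymm (inv_anti_mono hA (vop_ne_zero hA) (le_vop A)) (le_vop (1 / A))

theorem one_div_mul_one_div_eq_vop_div_vop (F : FractionalIdeal (nonZeroDivisors D) K) :
    1 / (F * (1 / F)) = vop F / vop F := by
  rcases eq_or_ne F 0 with rfl | hF
  · simp [vop]
  rw [one_div_mul_eq_one_div_div hF (FractionalIdeal.one_div_ne_zero_s6 hF)]
  refine le_antisymm (div_self_le_one_div_div_one_div (1 / F)) ?_
  simpa only [one_div_vop] using div_self_le_one_div_div_one_div (vop F)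

/-- `(F^v : F^v) = D` for all nonzero f.g. fractional ideals iff `D` is a `v`-domain. -/
theorem vcolon_iff_vDomain :
    (∀ F : FractionalIdeal (nonZeroDivisors D) K, F ≠ 0 → (F : Submodule D K).FG →
        vop F / vop F = 1) ↔
      (∀ F : FractionalIdeal (nonZeroDivisors D) K, F ≠ 0 → (F : Submodule D K).FG →
        1 / (F * (1 / F)) = 1) := by
  simp only [one_div_mul_one_div_eq_vop_div_vop]
end

section
/- Let D be an integral domain and F a nonzero finitely generated fractional ideal. Then F is t-invertible (i.e., the product F·F⁻¹ contains a finitely generated subideal G with G^v = D) if and only if F is v-invertible and F⁻¹ is v-finite (i.e., F⁻¹ = H^v for some nonzero finitely generated fractional ideal H). -/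
/-! Since `1 / 0 = 0`, the identities of the `v`-operation below hold for all fractional
ideals. If `G ⊆ F·F⁻¹` is finitely generated with `G^v = D`, compactness of `G` in the lattice
of submodules gives a finitely generated `H ⊆ F⁻¹` with `G ⊆ F·H`; then
`F⁻¹·H⁻¹ ⊆ (F·H)⁻¹ ⊆ G⁻¹ = D`, so `F⁻¹ ⊆ H^v ⊆ (F⁻¹)^v = F⁻¹`. Conversely, if `F⁻¹ = H^v`
then `G = F·H` works, because `(F·H)⁻¹ = (F·H^v)⁻¹ = (F·F⁻¹)⁻¹`. -/

open FractionalIdeal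

variable {D K : Type*} [CommRing D] [IsDomain D] [Field K] [Algebra D K] [IsFractionRing D K]

theorem Submodule.exists_fg_le_and_le_mul_of_fg_le_mul {R A : Type*} [CommSemiring R]
    [Semiring A] [Algebra R A] {G M N : Submodule R A} (hG : G.FG) (h : G ≤ M * N) :
    ∃ H ≤ N, H.FG ∧ G ≤ M * H := by
  have hN : N = ⨆ x : N, span R {(x : A)} := by
    rw [← span_range_eq_iSup (R := R) (v := ((↑) : N → A)), Subtype.range_coe, span_eq]
  rw [hN, mul_iSup] at h
  obtain ⟨s, hs⟩ := CompleteLattice.IsCompactElement.exists_finset_of_le_iSup _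
    ((fg_iff_compact G).mp hG) _ h
  refine ⟨⨆ x ∈ s, span R {(x : A)}, ?_, fg_biSup s _ fun x _ ↦ fg_span_singleton _, ?_⟩
  · exact iSup₂_le fun x _ ↦ (span_singleton_le_iff_mem _ _).mpr x.2
  · simpa only [mul_iSup] using hs

theorem FractionalIdeal.exists_fg_le_and_le_mul_of_fg_le_mul {R P : Type*} [CommRing R]
    {S : Submonoid R} [CommRing P] [Algebra R P] {G I J : FractionalIdeal S P}
    (hG : (G : Submodule R P).FG) (h : G ≤ I * J) :
    ∃ H ≤ J, (H : Submodule R P).FG ∧ G ≤ I * H := by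
  rw [← coe_le_coe, coe_mul] at h
  obtain ⟨H, hHJ, hH, hGH⟩ := Submodule.exists_fg_le_and_le_mul_of_fg_le_mul hG h
  let H' : FractionalIdeal S P := ⟨H, isFractional_of_le hHJ⟩
  exact ⟨H', hHJ, hH, coe_le_coe.mp (hGH.trans_eq (coe_mul I H').symm)⟩

namespace FractionalIdeal

instance {R P : Type*} [CommRing R] {S : Submonoid R} [CommRing P] [Algebra R P]
    [NoZeroDivisors P] : NoZeroDivisors (FractionalIdeal S P) where
  eq_zero_or_eq_zero_of_mul_eq_zero {I J} h := by
    simpa only [← coeToSubmodule_inj, coe_mul, coe_zero, Submodule.zero_eq_bot,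
      Submodule.mul_eq_bot] using congrArg ((↑) : FractionalIdeal S P → Submodule R P) h

theorem one_div_ne_zero_of_ne_zero {A : FractionalIdeal (nonZeroDivisors D) K} (hA : A ≠ 0) :
    1 / A ≠ 0 := by
  obtain ⟨d, hd, hdA⟩ := A.isFractional
  have hd_mem : algebraMap D K d ∈ 1 / A := by
    rw [mem_div_iff_of_ne_zero hA]
    intro y hy
    obtain ⟨r, hr⟩ := hdA y hy
    exact (mem_one_iff _).mpr ⟨r, by rw [hr, Algebra.smul_def]⟩
  intro h
  rw [h, mem_zero_iff, IsFractionRing.to_map_eq_zero_iff] at hd_mem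
  exact nonZeroDivisors.ne_zero hd hd_mem

theorem one_div_le_one_div_of_le {A B : FractionalIdeal (nonZeroDivisors D) K} (hA : A ≠ 0)
    (h : A ≤ B) : 1 / B ≤ 1 / A := by
  rw [le_div_iff_mul_le hA]
  calc 1 / B * A ≤ 1 / B * B := mul_le_mul_right h _
    _ ≤ 1 := by rw [mul_comm]; exact mul_one_div_le_one

theorem one_div_mul_one_div_le (A B : FractionalIdeal (nonZeroDivisors D) K) :
    1 / A * (1 / B) ≤ 1 / (A * B) := by
  by_cases hAB : A * B = 0
  · obtain rfl | rfl := mul_eq_zero.mp hAB <;> simp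
  rw [le_div_iff_mul_le hAB]
  calc 1 / A * (1 / B) * (A * B) = A * (1 / A) * (B * (1 / B)) := by ring
    _ ≤ 1 * 1 := mul_le_mul' mul_one_div_le_one mul_one_div_le_one
    _ = 1 := one_mul 1

end FractionalIdeal

theorem vop_mono {A B : FractionalIdeal (nonZeroDivisors D) K} (h : A ≤ B) : vop A ≤ vop B := by
  by_cases hA : A = 0
  · simp [hA, vop]
  have hB : B ≠ 0 := fun hB ↦ hA (FractionalIdeal.le_zero_iff.mp (hB ▸ h))
  exact one_div_le_one_div_of_le (one_div_ne_zero_of_ne_zero hB) (one_div_le_one_div_of_le hA h)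

theorem vop_one : vop (1 : FractionalIdeal (nonZeroDivisors D) K) = 1 := by
  simp [vop]

theorem vop_eq_one_iff {A : FractionalIdeal (nonZeroDivisors D) K} : vop A = 1 ↔ 1 / A = 1 := by
  refine ⟨fun h ↦ ?_, fun h ↦ ?_⟩
  · rw [← one_div_vop, h, FractionalIdeal.div_one]
  · rw [vop, h, FractionalIdeal.div_one]

theorem one_div_mul_vop (A B : FractionalIdeal (nonZeroDivisors D) K) :
    1 / (A * vop B) = 1 / (A * B) := by
  by_cases hAB : A * B = 0
  · obtain rfl | rfl := mul_eq_zero.mp hAB <;> simp [vop]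
  have hB : B ≠ 0 := right_ne_zero_of_mul hAB
  refine le_antisymm (one_div_le_one_div_of_le hAB (mul_le_mul_right (le_vop B) A)) ?_
  have hvB : vop B ≠ 0 := one_div_ne_zero_of_ne_zero (one_div_ne_zero_of_ne_zero hB)
  rw [le_div_iff_mul_le (mul_ne_zero (left_ne_zero_of_mul hAB) hvB), ← mul_assoc]
  have hAB_B : 1 / (A * B) * A ≤ 1 / B := by
    rw [le_div_iff_mul_le hB, mul_assoc, mul_comm]
    exact mul_one_div_le_one
  calc 1 / (A * B) * A * vop B ≤ 1 / B * vop B := mul_le_mul_left hAB_B _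
    _ ≤ 1 := mul_one_div_le_one

theorem one_div_le_vop_of_one_div_mul_le_one {A B : FractionalIdeal (nonZeroDivisors D) K}
    (hB : B ≠ 0) (h : 1 / (A * B) ≤ 1) : 1 / A ≤ vop B := by
  rw [vop, le_div_iff_mul_le (one_div_ne_zero_of_ne_zero hB)]
  exact (one_div_mul_one_div_le A B).trans h

theorem vop_one_div (A : FractionalIdeal (nonZeroDivisors D) K) : vop (1 / A) = 1 / A :=
  one_div_vop A

theorem tInvertible_iff_vInvertible_and_inv_vFinite_general
    (F : FractionalIdeal (nonZeroDivisors D) K)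
    (hfg : (F : Submodule D K).FG) :
    (∃ G : FractionalIdeal (nonZeroDivisors D) K,
        G ≤ F * (1 / F) ∧ (G : Submodule D K).FG ∧ vop G = 1) ↔
      (IsVInvertible F ∧ ∃ H : FractionalIdeal (nonZeroDivisors D) K,
        H ≠ 0 ∧ (H : Submodule D K).FG ∧ 1 / F = vop H) := by
  constructor
  · rintro ⟨G, hGF, hG, hGv⟩
    have hG0 : G ≠ 0 := by
      rintro rfl
      simp [vop] at hGv
    have hvF : IsVInvertible F := le_antisymm ((vop_mono mul_one_div_le_one).trans_eq vop_one)
      (hGv.symm.trans_le (vop_mono hGF))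
    obtain ⟨H, hHF, hH, hGH⟩ := exists_fg_le_and_le_mul_of_fg_le_mul hG hGF
    have hH0 : H ≠ 0 := by
      rintro rfl
      exact hG0 (FractionalIdeal.le_zero_iff.mp (by simpa using hGH))
    refine ⟨hvF, H, hH0, hH, le_antisymm ?_ ((vop_mono hHF).trans_eq (vop_one_div F))⟩
    exact one_div_le_vop_of_one_div_mul_le_one hH0
      ((one_div_le_one_div_of_le hG0 hGH).trans (vop_eq_one_iff.mp hGv).le)
  · rintro ⟨hvF, H, -, hH, hFH⟩
    refine ⟨F * H, mul_le_mul_right (hFH ▸ le_vop H) F, coe_mul F H ▸ hfg.mul hH, ?_⟩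
    rwa [IsVInvertible, hFH, vop, one_div_mul_vop, ← vop] at hvF

/-- A nonzero f.g. fractional ideal is `t`-invertible iff it is `v`-invertible and its
inverse is `v`-finite. -/
theorem tInvertible_iff_vInvertible_and_inv_vFinite
    (F : FractionalIdeal (nonZeroDivisors D) K) (hF : F ≠ 0)
    (hfg : (F : Submodule D K).FG) :
    (∃ G : FractionalIdeal (nonZeroDivisors D) K,
        G ≤ F * (1 / F) ∧ (G : Submodule D K).FG ∧ vop G = 1) ↔
      (IsVInvertible F ∧ ∃ H : FractionalIdeal (nonZeroDivisors D) K,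
        H ≠ 0 ∧ (H : Submodule D K).FG ∧ 1 / F = vop H) :=
  tInvertible_iff_vInvertible_and_inv_vFinite_general F hfg
end

section
/- Let D be an integral domain. Then D is a v-domain if and only if every nonzero fractional ideal of D generated by two elements is v-invertible. -/
open FractionalIdeal

variable {D K : Type*} [CommRing D] [IsDomain D] [Field K] [Algebra D K] [IsFractionRing D K]

open scoped nonZeroDivisors

/-!
Write `A⁻¹` for `1 / A`. Since `I⁻¹⁻¹⁻¹ = I⁻¹`, `A` is v-invertible iff `(A A⁻¹)⁻¹ = D`, and
among ideals `G ≤ D` the condition `G⁻¹ = D` passes to larger ideals. From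
`(A A⁻¹)(B B⁻¹) ≤ (AB)(AB)⁻¹ ≤ A A⁻¹` it follows that products of v-invertible ideals are
v-invertible and that factors of v-invertible products are v-invertible. Addition of ideals is
idempotent, which gives the exact identity `(A+B)(A+C)(B+C) = (A+B+C)(AB+AC+BC)`; so `A+B+C` is
v-invertible as soon as `A+B`, `A+C` and `B+C` are, and induction on the number of generators
reduces every finitely generated ideal to two-generated ones.
-/

namespace FractionalIdeal

section Semiring

variable {R P : Type*} [CommRing R] [CommRing P] [Algebra R P] {S : Submonoid R}

instance [NoZeroDivisors P] : NoZeroDivisors (FractionalIdeal S P) :=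
  coeToSubmodule_injective.noZeroDivisors _ coe_zero coe_mul

theorem add_mul_add_mul_add (I J L : FractionalIdeal S P) :
    (I + J) * (I + L) * (J + L) = (I + J + L) * (I * J + I * L + J * L) := by
  have h : I * L * J ≤ (I + J) * (I + L) * (J + L) :=
    mul_le_mul' (mul_le_mul' le_self_add le_add_self) le_self_add
  calc (I + J) * (I + L) * (J + L) = (I + J) * (I + L) * (J + L) + I * L * J := by
        rw [← sup_eq_add _ (I * L * J), sup_eq_left.mpr h]
    _ = (I + J + L) * (I * J + I * L + J * L) := by ring

variable [IsLocalization S P]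

theorem coe_sum_spanSingleton (s : Finset P) :
    ((∑ x ∈ s, spanSingleton S x : FractionalIdeal S P) : Submodule R P) =
      Submodule.span R s := by
  classical
  induction s using Finset.induction_on with
  | empty => simp
  | insert x s hx ih =>
    rw [Finset.sum_insert hx, coe_add, coe_spanSingleton, ih, Finset.coe_insert,
      Submodule.span_insert, Submodule.add_eq_sup]

theorem exists_eq_sum_spanSingleton {F : FractionalIdeal S P} (hF : (F : Submodule R P).FG) :
    ∃ s : Finset P, F = ∑ x ∈ s, spanSingleton S x := by
  obtain ⟨s, hs⟩ := hF
  exact ⟨s, coeToSubmodule_injective ((coe_sum_spanSingleton s).trans hs).symm⟩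

theorem fg_spanSingleton_add_spanSingleton (x y : P) :
    ((spanSingleton S x + spanSingleton S y : FractionalIdeal S P) : Submodule R P).FG := by
  rw [coe_add, coe_spanSingleton, coe_spanSingleton]
  exact (Submodule.fg_span_singleton x).sup (Submodule.fg_span_singleton y)

end Semiring

variable {I J : FractionalIdeal D⁰ K}

protected theorem inv_ne_zero (hI : I ≠ 0) : I⁻¹ ≠ 0 := by
  intro h
  have hden := den_mem_inv hI
  rw [h, mem_zero_iff, IsFractionRing.to_map_eq_zero_iff] at hden
  exact nonZeroDivisors.coe_ne_zero _ hden

theorem le_inv_iff_mul_le (hJ : J ≠ 0) : I ≤ J⁻¹ ↔ I * J ≤ 1 :=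
  le_div_iff_mul_le hJ

theorem mul_inv_le_one (I : FractionalIdeal D⁰ K) : I * I⁻¹ ≤ 1 :=
  mul_one_div_le_one

theorem le_inv_inv (I : FractionalIdeal D⁰ K) : I ≤ I⁻¹⁻¹ := by
  rcases eq_or_ne I 0 with rfl | hI
  · exact zero_le _
  · exact (le_inv_iff_mul_le (FractionalIdeal.inv_ne_zero hI)).mpr (mul_inv_le_one I)

theorem inv_inv_inv (I : FractionalIdeal D⁰ K) : I⁻¹⁻¹⁻¹ = I⁻¹ := by
  rcases eq_or_ne I 0 with rfl | hI
  · simp only [inv_zero']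
  · exact le_antisymm (inv_anti_mono hI (ne_bot_of_le_ne_bot hI (le_inv_inv I)) (le_inv_inv I))
      (le_inv_inv I⁻¹)

theorem one_le_inv (hI : I ≠ 0) (hI1 : I ≤ 1) : 1 ≤ I⁻¹ :=
  (le_inv_iff_mul_le hI).mpr (by rwa [one_mul])

theorem inv_mul_inv_le_mul_inv (I J : FractionalIdeal D⁰ K) :
    I⁻¹ * J⁻¹ ≤ (I * J)⁻¹ := by
  rcases eq_or_ne (I * J) 0 with hIJ | hIJ
  · rcases mul_eq_zero.mp hIJ with rfl | rfl <;> simp only [inv_zero', zero_mul, mul_zero, le_refl]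
  · rw [le_inv_iff_mul_le hIJ]
    calc I⁻¹ * J⁻¹ * (I * J) = I * I⁻¹ * (J * J⁻¹) := by ring
      _ ≤ 1 * 1 := mul_le_mul' (mul_inv_le_one I) (mul_inv_le_one J)
      _ = 1 := one_mul 1

theorem ne_zero_of_inv_eq_one (h : I⁻¹ = 1) : I ≠ 0 := by
  rintro rfl
  exact zero_ne_one ((inv_zero' K).symm.trans h)

theorem le_one_of_inv_eq_one (h : I⁻¹ = 1) : I ≤ 1 := by
  simpa only [h, inv_one] using le_inv_inv I

theorem mul_inv_eq_one_of_inv_eq_one (hI : I⁻¹ = 1) (hJ : J⁻¹ = 1) : (I * J)⁻¹ = 1 := by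
  have hI0 := ne_zero_of_inv_eq_one hI
  have hJ0 := ne_zero_of_inv_eq_one hJ
  refine le_antisymm ?_ (one_le_inv (mul_ne_zero hI0 hJ0)
    (mul_le_one' (le_one_of_inv_eq_one hI) (le_one_of_inv_eq_one hJ)))
  rw [← hJ, le_inv_iff_mul_le hJ0, ← hI, le_inv_iff_mul_le hI0]
  calc (I * J)⁻¹ * J * I = I * J * (I * J)⁻¹ := by ring
    _ ≤ 1 := mul_inv_le_one _

theorem inv_eq_one_of_le {G H : FractionalIdeal D⁰ K} (hHG : H ≤ G) (hG : G ≤ 1)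
    (hH : H⁻¹ = 1) : G⁻¹ = 1 := by
  have hH0 := ne_zero_of_inv_eq_one hH
  have hG0 : G ≠ 0 := ne_bot_of_le_ne_bot hH0 hHG
  exact le_antisymm (hH ▸ inv_anti_mono hH0 hG0 hHG) (one_le_inv hG0 hG)

end FractionalIdeal

variable {A B C : FractionalIdeal D⁰ K}

theorem isVInvertible_iff : IsVInvertible A ↔ (A * A⁻¹)⁻¹ = 1 := by
  change (A * A⁻¹)⁻¹⁻¹ = 1 ↔ _
  constructor
  · intro h
    rw [← inv_inv_inv, h, inv_one]
  · intro h
    rw [h, inv_one]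

theorem IsVInvertible.ne_zero (h : IsVInvertible A) : A ≠ 0 := by
  rintro rfl
  rw [isVInvertible_iff, zero_mul, inv_zero'] at h
  exact zero_ne_one h

theorem IsVInvertible.mul (hA : IsVInvertible A) (hB : IsVInvertible B) :
    IsVInvertible (A * B) := by
  rw [isVInvertible_iff] at *
  refine inv_eq_one_of_le ?_ (mul_inv_le_one _) (mul_inv_eq_one_of_inv_eq_one hA hB)
  calc A * A⁻¹ * (B * B⁻¹) = A * B * (A⁻¹ * B⁻¹) := by ring
    _ ≤ A * B * (A * B)⁻¹ := mul_le_mul_right (inv_mul_inv_le_mul_inv A B) _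

theorem IsVInvertible.of_mul_left (h : IsVInvertible (A * B)) : IsVInvertible A := by
  have hA : A ≠ 0 := left_ne_zero_of_mul h.ne_zero
  rw [isVInvertible_iff] at *
  refine inv_eq_one_of_le (mul_le_mul_right ?_ A) (mul_inv_le_one A) (mul_assoc A B _ ▸ h)
  rw [le_inv_iff_mul_le hA]
  calc B * (A * B)⁻¹ * A = A * B * (A * B)⁻¹ := by ring
    _ ≤ 1 := mul_inv_le_one _

theorem IsVInvertible.add_add (hAB : IsVInvertible (A + B)) (hAC : IsVInvertible (A + C))
    (hBC : IsVInvertible (B + C)) : IsVInvertible (A + B + C) := by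
  have h := (hAB.mul hAC).mul hBC
  rw [add_mul_add_mul_add] at h
  exact h.of_mul_left

theorem isVInvertible_add_add_sum_spanSingleton
    (hpair : ∀ x y : K, spanSingleton D⁰ x + spanSingleton D⁰ y ≠ 0 →
      IsVInvertible (spanSingleton D⁰ x + spanSingleton D⁰ y))
    (t : Finset K) {x : K} (hx : x ≠ 0) (y : K) :
    IsVInvertible
      (spanSingleton D⁰ x + spanSingleton D⁰ y + ∑ z ∈ t, spanSingleton D⁰ z) := by
  classical
  have hpair' : ∀ {x : K} (y : K), x ≠ 0 →
      IsVInvertible (spanSingleton D⁰ x + spanSingleton D⁰ y) := fun y hx =>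
    hpair _ y fun h => spanSingleton_ne_zero_iff.mpr hx (add_eq_zero.mp h).1
  induction t using Finset.induction_on generalizing x y with
  | empty => simpa only [Finset.sum_empty, add_zero] using hpair' y hx
  | insert z t hz ih =>
    rw [Finset.sum_insert hz]
    rcases eq_or_ne y 0 with rfl | hy
    · simpa only [spanSingleton_zero, add_zero, add_assoc] using ih hx z
    · exact (hpair' y hx).add_add (by simpa only [add_assoc] using ih hx z)
        (by simpa only [add_assoc] using ih hy z)

/-- `D` is a `v`-domain iff every nonzero two-generated fractional ideal is
`v`-invertible. -/
theorem vDomain_iff_twoGenerated_vInvertible :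
    (∀ F : FractionalIdeal (nonZeroDivisors D) K, F ≠ 0 → (F : Submodule D K).FG →
        IsVInvertible F) ↔
      ∀ x y : K,
        spanSingleton (nonZeroDivisors D) x + spanSingleton (nonZeroDivisors D) y ≠ 0 →
        IsVInvertible
          (spanSingleton (nonZeroDivisors D) x + spanSingleton (nonZeroDivisors D) y) := by
  refine ⟨fun h x y hxy => h _ hxy (fg_spanSingleton_add_spanSingleton x y), ?_⟩
  intro hpair F hF hFG
  obtain ⟨s, rfl⟩ := exists_eq_sum_spanSingleton hFG
  obtain ⟨x, hxs, hx⟩ : ∃ x ∈ s, x ≠ 0 := by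
    by_contra! hs
    exact hF (Finset.sum_eq_zero fun x hx => by rw [hs x hx, spanSingleton_zero])
  have hxF : spanSingleton D⁰ x ≤ ∑ z ∈ s, spanSingleton D⁰ z :=
    Finset.single_le_sum (fun _ _ => zero_le _) hxs
  simpa only [spanSingleton_zero, add_zero, ← sup_eq_add, sup_eq_right.mpr hxF] using
    isVInvertible_add_add_sum_spanSingleton hpair s hx 0
end
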